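/- arXiv:2205.14973 — 2 statements merged into one kernel-verified Lean document; each statement's English description precedes it below -/
import Mathlib

section
/- Let g be a metric on ℝ^N with Christoffel symbols Γ, and let K be a smooth symmetric 2-tensor field which is a Killing tensor of g, i.e. ∇_κ K_{μν} + ∇_μ K_{νκ} + ∇_ν K_{κμ} = 0 identically. Then along every solution (x,n) : I → ℝ^N × ℝ_{>0} of the einbein geodesic equations, the function λ ↦ Σ_{μ,ν} K_{μν}(x(λ))ẋ^μ(λ)ẋ^ν(λ)/n(λ)² is constant on I. -/
open scoped ContDiff

/-- Partial derivative of a scalar function on ℝ^N in the i-th coordinate direction. -/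
noncomputable def pd {N : ℕ} (f : (Fin N → ℝ) → ℝ) (i : Fin N) (x : Fin N → ℝ) : ℝ :=
  fderiv ℝ f x (Pi.single i 1)

/-- Christoffel symbols Γ^μ_{κλ} of the metric `g` with inverse `ginv`. -/
noncomputable def christoffel {N : ℕ} (g ginv : (Fin N → ℝ) → Fin N → Fin N → ℝ)
    (μ κ lam : Fin N) (x : Fin N → ℝ) : ℝ :=
  (1 / 2) * ∑ σ, ginv x μ σ *
    (pd (fun y => g y σ lam) κ x + pd (fun y => g y κ σ) lam x - pd (fun y => g y κ lam) σ x)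

/-- Covariant derivative ∇_κ K_{μν} of a 2-tensor field `K`. -/
noncomputable def covD {N : ℕ} (g ginv K : (Fin N → ℝ) → Fin N → Fin N → ℝ)
    (κ μ ν : Fin N) (x : Fin N → ℝ) : ℝ :=
  pd (fun y => K y μ ν) κ x
    - ∑ σ, (christoffel g ginv σ κ μ x * K x σ ν + christoffel g ginv σ κ ν x * K x μ σ)

lemma clm_apply_sum {N : ℕ} (L : (Fin N → ℝ) →L[ℝ] ℝ) (v : Fin N → ℝ) :
    L v = ∑ σ, v σ * L (Pi.single σ 1) := by
  have hv : v = ∑ σ, v σ • (Pi.single σ 1 : Fin N → ℝ) := by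
    simp_rw [← Pi.single_smul, smul_eq_mul, mul_one]
    exact (Finset.univ_sum_single v).symm
  conv_lhs => rw [hv]
  rw [map_sum]
  simp [smul_eq_mul]

lemma hasDerivAt_comp_curve {N : ℕ} (f : (Fin N → ℝ) → ℝ) (hf : ContDiff ℝ (⊤ : ℕ∞) f)
    (c : ℝ → Fin N → ℝ) (u : Fin N → ℝ) (t : ℝ) (hc : HasDerivAt c u t) :
    HasDerivAt (fun s => f (c s)) (∑ σ, u σ * pd f σ (c t)) t := by
  have hfd := (hf.differentiable (by simp) (c t)).hasFDerivAt
  have h := hfd.comp_hasDerivAt t hc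
  rw [clm_apply_sum] at h
  exact h



section helpers
variable {ι : Type*} [Fintype ι]

lemma sc3 (f : ι → ι → ι → ℝ) :
    ∑ a, ∑ b, ∑ c, f a b c = ∑ c, ∑ a, ∑ b, f a b c :=
  calc ∑ a, ∑ b, ∑ c, f a b c
      = ∑ a, ∑ c, ∑ b, f a b c := Finset.sum_congr rfl fun a _ => Finset.sum_comm
    _ = ∑ c, ∑ a, ∑ b, f a b c := Finset.sum_comm

lemma sc3' (f : ι → ι → ι → ℝ) :
    ∑ a, ∑ b, ∑ c, f a b c = ∑ b, ∑ c, ∑ a, f a b c :=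
  calc ∑ a, ∑ b, ∑ c, f a b c
      = ∑ b, ∑ a, ∑ c, f a b c := Finset.sum_comm
    _ = ∑ b, ∑ c, ∑ a, f a b c := Finset.sum_congr rfl fun b _ => Finset.sum_comm

lemma perm4 (f : ι → ι → ι → ι → ℝ) :
    ∑ a, ∑ b, ∑ c, ∑ d, f a b c d = ∑ d, ∑ c, ∑ a, ∑ b, f a b c d :=
  calc ∑ a, ∑ b, ∑ c, ∑ d, f a b c d
      = ∑ a, ∑ b, ∑ d, ∑ c, f a b c d :=
        Finset.sum_congr rfl fun a _ => Finset.sum_congr rfl fun b _ => Finset.sum_comm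
    _ = ∑ a, ∑ d, ∑ b, ∑ c, f a b c d :=
        Finset.sum_congr rfl fun a _ => Finset.sum_comm
    _ = ∑ d, ∑ a, ∑ b, ∑ c, f a b c d := Finset.sum_comm
    _ = ∑ d, ∑ a, ∑ c, ∑ b, f a b c d :=
        Finset.sum_congr rfl fun d _ => Finset.sum_congr rfl fun a _ => Finset.sum_comm
    _ = ∑ d, ∑ c, ∑ a, ∑ b, f a b c d :=
        Finset.sum_congr rfl fun d _ => Finset.sum_comm

lemma perm4c (f : ι → ι → ι → ι → ℝ) :
    ∑ a, ∑ b, ∑ c, ∑ d, f a b c d = ∑ b, ∑ d, ∑ a, ∑ c, f a b c d :=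
  calc ∑ a, ∑ b, ∑ c, ∑ d, f a b c d
      = ∑ b, ∑ a, ∑ c, ∑ d, f a b c d := Finset.sum_comm
    _ = ∑ b, ∑ a, ∑ d, ∑ c, f a b c d :=
        Finset.sum_congr rfl fun b _ => Finset.sum_congr rfl fun a _ => Finset.sum_comm
    _ = ∑ b, ∑ d, ∑ a, ∑ c, f a b c d :=
        Finset.sum_congr rfl fun b _ => Finset.sum_comm

end helpers

lemma key_algebra {N : ℕ} (Kf : Fin N → Fin N → ℝ) (Γf : Fin N → Fin N → Fin N → ℝ)
    (D : Fin N → Fin N → Fin N → ℝ) (u A : Fin N → ℝ) (r : ℝ)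
    (hKs : ∀ μ ν, Kf μ ν = Kf ν μ)
    (hKill : ∀ κ μ ν,
      (D κ μ ν - ∑ σ, (Γf σ κ μ * Kf σ ν + Γf σ κ ν * Kf μ σ))
      + (D μ ν κ - ∑ σ, (Γf σ μ ν * Kf σ κ + Γf σ μ κ * Kf ν σ))
      + (D ν κ μ - ∑ σ, (Γf σ ν κ * Kf σ μ + Γf σ ν μ * Kf κ σ)) = 0)
    (hA : ∀ μ, A μ = u μ * r - ∑ κ, ∑ σ, Γf μ κ σ * u κ * u σ) :
    ∑ μ, ∑ ν, (((∑ σ, u σ * D σ μ ν) * u μ + Kf μ ν * A μ) * u ν + Kf μ ν * u μ * A ν)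
    = 2 * (∑ μ, ∑ ν, Kf μ ν * u μ * u ν) * r := by
  set G : Fin N → ℝ := fun μ => ∑ κ, ∑ σ, Γf μ κ σ * u κ * u σ with hG
  set P : ℝ := ∑ κ, ∑ μ, ∑ ν, D κ μ ν * (u κ * u μ * u ν) with hP
  set QA : ℝ := ∑ κ, ∑ μ, ∑ ν, ∑ σ, Γf σ κ μ * Kf σ ν * (u κ * u μ * u ν) with hQA
  set QB : ℝ := ∑ κ, ∑ μ, ∑ ν, ∑ σ, Γf σ κ ν * Kf μ σ * (u κ * u μ * u ν) with hQB
  -- Killing contraction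
  have h0 : ∑ κ, ∑ μ, ∑ ν,
      (((D κ μ ν - ∑ σ, (Γf σ κ μ * Kf σ ν + Γf σ κ ν * Kf μ σ))
      + (D μ ν κ - ∑ σ, (Γf σ μ ν * Kf σ κ + Γf σ μ κ * Kf ν σ))
      + (D ν κ μ - ∑ σ, (Γf σ ν κ * Kf σ μ + Γf σ ν μ * Kf κ σ))) * (u κ * u μ * u ν)) = 0 := by
    simp [hKill]
  have hsplit : (∑ κ, ∑ μ, ∑ ν,
      ((D κ μ ν - ∑ σ, (Γf σ κ μ * Kf σ ν + Γf σ κ ν * Kf μ σ)) * (u κ * u μ * u ν)))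
      + (∑ κ, ∑ μ, ∑ ν,
      ((D μ ν κ - ∑ σ, (Γf σ μ ν * Kf σ κ + Γf σ μ κ * Kf ν σ)) * (u κ * u μ * u ν)))
      + (∑ κ, ∑ μ, ∑ ν,
      ((D ν κ μ - ∑ σ, (Γf σ ν κ * Kf σ μ + Γf σ ν μ * Kf κ σ)) * (u κ * u μ * u ν))) = 0 := by
    rw [← h0]
    simp only [← Finset.sum_add_distrib]
    refine Finset.sum_congr rfl fun κ _ => Finset.sum_congr rfl fun μ _ =>
      Finset.sum_congr rfl fun ν _ => ?_
    ring
  have hS2 : ∑ κ, ∑ μ, ∑ ν,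
      ((D μ ν κ - ∑ σ, (Γf σ μ ν * Kf σ κ + Γf σ μ κ * Kf ν σ)) * (u κ * u μ * u ν))
      = ∑ κ, ∑ μ, ∑ ν,
      ((D κ μ ν - ∑ σ, (Γf σ κ μ * Kf σ ν + Γf σ κ ν * Kf μ σ)) * (u κ * u μ * u ν)) := by
    rw [sc3' (fun κ μ ν => (D μ ν κ - ∑ σ, (Γf σ μ ν * Kf σ κ + Γf σ μ κ * Kf ν σ))
      * (u κ * u μ * u ν))]
    refine Finset.sum_congr rfl fun a _ => Finset.sum_congr rfl fun b _ =>
      Finset.sum_congr rfl fun c _ => ?_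
    ring
  have hS3 : ∑ κ, ∑ μ, ∑ ν,
      ((D ν κ μ - ∑ σ, (Γf σ ν κ * Kf σ μ + Γf σ ν μ * Kf κ σ)) * (u κ * u μ * u ν))
      = ∑ κ, ∑ μ, ∑ ν,
      ((D κ μ ν - ∑ σ, (Γf σ κ μ * Kf σ ν + Γf σ κ ν * Kf μ σ)) * (u κ * u μ * u ν)) := by
    rw [sc3 (fun κ μ ν => (D ν κ μ - ∑ σ, (Γf σ ν κ * Kf σ μ + Γf σ ν μ * Kf κ σ))
      * (u κ * u μ * u ν))]
    refine Finset.sum_congr rfl fun a _ => Finset.sum_congr rfl fun b _ =>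
      Finset.sum_congr rfl fun c _ => ?_
    ring
  have hS1 : ∑ κ, ∑ μ, ∑ ν,
      ((D κ μ ν - ∑ σ, (Γf σ κ μ * Kf σ ν + Γf σ κ ν * Kf μ σ)) * (u κ * u μ * u ν)) = 0 := by
    rw [hS2, hS3] at hsplit; linarith
  have hexp : P - QA - QB = 0 := by
    rw [← hS1, hP, hQA, hQB]
    simp only [← Finset.sum_sub_distrib]
    refine Finset.sum_congr rfl fun κ _ => Finset.sum_congr rfl fun μ _ =>
      Finset.sum_congr rfl fun ν _ => ?_
    rw [sub_mul, Finset.sum_mul, sub_sub, ← Finset.sum_add_distrib]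
    congr 1
    exact Finset.sum_congr rfl fun σ _ => by ring
  have hQBA : QB = QA := by
    rw [hQA, hQB]
    refine Finset.sum_congr rfl fun κ _ => ?_
    rw [Finset.sum_comm]
    refine Finset.sum_congr rfl fun μ _ => Finset.sum_congr rfl fun ν _ =>
      Finset.sum_congr rfl fun σ _ => ?_
    rw [hKs ν σ]; ring
  -- per-term expansion of the goal's summand
  have hterm : ∀ μ ν : Fin N,
      ((∑ σ, u σ * D σ μ ν) * u μ + Kf μ ν * A μ) * u ν + Kf μ ν * u μ * A ν
      = (∑ σ, u σ * D σ μ ν) * u μ * u ν + 2 * (Kf μ ν * u μ * u ν) * r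
        - Kf μ ν * G μ * u ν - Kf μ ν * u μ * G ν := by
    intro μ ν
    rw [hA μ, hA ν]
    simp only [hG]
    ring
  simp_rw [hterm]
  have hsplit4 : ∀ f1 f2 f3 f4 : Fin N → Fin N → ℝ,
      ∑ μ, ∑ ν, (f1 μ ν + f2 μ ν - f3 μ ν - f4 μ ν)
      = (∑ μ, ∑ ν, f1 μ ν) + (∑ μ, ∑ ν, f2 μ ν) - (∑ μ, ∑ ν, f3 μ ν) - (∑ μ, ∑ ν, f4 μ ν) := by
    intro f1 f2 f3 f4
    simp [Finset.sum_sub_distrib, Finset.sum_add_distrib]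
  rw [hsplit4 (fun μ ν => (∑ σ, u σ * D σ μ ν) * u μ * u ν)
      (fun μ ν => 2 * (Kf μ ν * u μ * u ν) * r)
      (fun μ ν => Kf μ ν * G μ * u ν)
      (fun μ ν => Kf μ ν * u μ * G ν)]
  have hP2 : ∑ μ, ∑ ν, (∑ σ, u σ * D σ μ ν) * u μ * u ν = P := by
    simp only [Finset.sum_mul]
    rw [sc3 (fun μ ν σ => u σ * D σ μ ν * u μ * u ν), hP]
    refine Finset.sum_congr rfl fun a _ => Finset.sum_congr rfl fun b _ =>
      Finset.sum_congr rfl fun c _ => ?_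
    ring
  have hT2 : ∑ μ, ∑ ν, 2 * (Kf μ ν * u μ * u ν) * r
      = 2 * (∑ μ, ∑ ν, Kf μ ν * u μ * u ν) * r := by
    rw [show (2 : ℝ) * (∑ μ, ∑ ν, Kf μ ν * u μ * u ν) * r
        = ∑ μ, (∑ ν, Kf μ ν * u μ * u ν) * (2 * r) by rw [← Finset.sum_mul]; ring]
    refine Finset.sum_congr rfl fun μ _ => ?_
    rw [Finset.sum_mul]
    refine Finset.sum_congr rfl fun ν _ => by ring
  have hR1 : ∑ μ, ∑ ν, Kf μ ν * G μ * u ν = QA := by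
    rw [hQA, perm4 (fun κ μ ν σ => Γf σ κ μ * Kf σ ν * (u κ * u μ * u ν))]
    refine Finset.sum_congr rfl fun μ _ => Finset.sum_congr rfl fun ν _ => ?_
    simp only [hG, Finset.mul_sum, Finset.sum_mul]
    refine Finset.sum_congr rfl fun κ _ => Finset.sum_congr rfl fun σ _ => ?_
    ring
  have hR2 : ∑ μ, ∑ ν, Kf μ ν * u μ * G ν = QB := by
    rw [hQB, perm4c (fun κ μ ν σ => Γf σ κ ν * Kf μ σ * (u κ * u μ * u ν))]
    refine Finset.sum_congr rfl fun μ _ => Finset.sum_congr rfl fun ν _ => ?_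
    simp only [hG, Finset.mul_sum, Finset.sum_mul]
    refine Finset.sum_congr rfl fun κ _ => Finset.sum_congr rfl fun σ _ => ?_
    ring
  rw [hP2, hT2, hR1, hR2]
  linarith [hexp, hQBA]

theorem stmt3 {N : ℕ}
    (g ginv K : (Fin N → ℝ) → Fin N → Fin N → ℝ)
    (hg_smooth : ∀ μ ν, ContDiff ℝ (⊤ : ℕ∞) (fun x => g x μ ν))
    (hg_symm : ∀ x μ ν, g x μ ν = g x ν μ)
    (hginv_smooth : ∀ μ ν, ContDiff ℝ (⊤ : ℕ∞) (fun x => ginv x μ ν))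
    (h_inv : ∀ x μ ν, (∑ σ, g x μ σ * ginv x σ ν) = if μ = ν then (1 : ℝ) else 0)
    (hK_smooth : ∀ μ ν, ContDiff ℝ (⊤ : ℕ∞) (fun x => K x μ ν))
    (hK_symm : ∀ x μ ν, K x μ ν = K x ν μ)
    (hKilling : ∀ x κ μ ν,
      covD g ginv K κ μ ν x + covD g ginv K μ ν κ x + covD g ginv K ν κ μ x = 0)
    (a b : ℝ) (c : ℝ → Fin N → ℝ) (n : ℝ → ℝ)
    (hc : ∀ μ, ContDiffOn ℝ (⊤ : ℕ∞) (fun t => c t μ) (Set.Ioo a b))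
    (hn : ContDiffOn ℝ (⊤ : ℕ∞) n (Set.Ioo a b))
    (hnpos : ∀ t ∈ Set.Ioo a b, 0 < n t)
    (hgeo : ∀ t ∈ Set.Ioo a b, ∀ μ,
      deriv (fun s => deriv (fun r => c r μ) s) t
        + (∑ κ, ∑ σ, christoffel g ginv μ κ σ (c t)
            * deriv (fun s => c s κ) t * deriv (fun s => c s σ) t)
      = deriv (fun s => c s μ) t * deriv n t / n t) :
    ∀ t₁ ∈ Set.Ioo a b, ∀ t₂ ∈ Set.Ioo a b,
      (∑ μ, ∑ ν, K (c t₁) μ ν * deriv (fun s => c s μ) t₁ * deriv (fun s => c s ν) t₁) / n t₁ ^ 2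
      = (∑ μ, ∑ ν, K (c t₂) μ ν * deriv (fun s => c s μ) t₂ * deriv (fun s => c s ν) t₂) / n t₂ ^ 2 := by
  intro t₁ ht₁ t₂ ht₂
  set E : ℝ → ℝ := fun t =>
    ∑ μ, ∑ ν, K (c t) μ ν * deriv (fun s => c s μ) t * deriv (fun s => c s ν) t with hEdef
  set F : ℝ → ℝ := fun t => E t / n t ^ 2 with hFdef
  have key : ∀ t ∈ Set.Ioo a b, HasDerivAt F 0 t := by
    intro t ht
    have hmem : Set.Ioo a b ∈ nhds t := isOpen_Ioo.mem_nhds ht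
    have hcd : ∀ μ, HasDerivAt (fun s => c s μ) (deriv (fun s => c s μ) t) t := fun μ =>
      (((hc μ).differentiableOn (by simp)).differentiableAt hmem).hasDerivAt
    have hcall : HasDerivAt c (fun μ => deriv (fun s => c s μ) t) t := hasDerivAt_pi.2 hcd
    have hKc : ∀ μ ν, HasDerivAt (fun s => K (c s) μ ν)
        (∑ σ, deriv (fun s => c s σ) t * pd (fun y => K y μ ν) σ (c t)) t := fun μ ν =>
      hasDerivAt_comp_curve _ (hK_smooth μ ν) c _ t hcall
    have hu : ∀ μ, ContDiffOn ℝ ∞ (deriv (fun s => c s μ)) (Set.Ioo a b) := fun μ =>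
      ((contDiffOn_infty_iff_deriv_of_isOpen isOpen_Ioo).1 ((hc μ).of_le (by simp))).2
    have hud : ∀ μ, HasDerivAt (deriv (fun s => c s μ))
        (deriv (deriv (fun s => c s μ)) t) t := fun μ =>
      (((hu μ).differentiableOn (by norm_num)).differentiableAt hmem).hasDerivAt
    have hnd : HasDerivAt n (deriv n t) t :=
      ((hn.differentiableOn (by simp)).differentiableAt hmem).hasDerivAt
    have hnne : n t ≠ 0 := (hnpos t ht).ne'
    have hE : HasDerivAt E (∑ μ, ∑ ν,
        (((∑ σ, deriv (fun s => c s σ) t * pd (fun y => K y μ ν) σ (c t))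
            * deriv (fun s => c s μ) t
          + K (c t) μ ν * deriv (deriv (fun s => c s μ)) t) * deriv (fun s => c s ν) t
        + K (c t) μ ν * deriv (fun s => c s μ) t * deriv (deriv (fun s => c s ν)) t)) t := by
      apply HasDerivAt.fun_sum
      intro μ _
      apply HasDerivAt.fun_sum
      intro ν _
      exact ((hKc μ ν).mul (hud μ)).mul (hud ν)
    have hKill' : ∀ κ μ ν : Fin N,
        (pd (fun y => K y μ ν) κ (c t)
          - ∑ σ, (christoffel g ginv σ κ μ (c t) * K (c t) σ ν
              + christoffel g ginv σ κ ν (c t) * K (c t) μ σ))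
        + (pd (fun y => K y ν κ) μ (c t)
          - ∑ σ, (christoffel g ginv σ μ ν (c t) * K (c t) σ κ
              + christoffel g ginv σ μ κ (c t) * K (c t) ν σ))
        + (pd (fun y => K y κ μ) ν (c t)
          - ∑ σ, (christoffel g ginv σ ν κ (c t) * K (c t) σ μ
              + christoffel g ginv σ ν μ (c t) * K (c t) κ σ)) = 0 := by
      intro κ μ ν
      have := hKilling (c t) κ μ ν
      simpa [covD] using this
    have hA' : ∀ μ : Fin N, deriv (deriv (fun s => c s μ)) t
        = deriv (fun s => c s μ) t * (deriv n t / n t)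
          - ∑ κ, ∑ σ, christoffel g ginv μ κ σ (c t)
              * deriv (fun s => c s κ) t * deriv (fun s => c s σ) t := by
      intro μ
      have h := hgeo t ht μ
      rw [mul_div_assoc] at h
      linarith
    have hkey := key_algebra (fun μ ν => K (c t) μ ν)
      (fun σ κ lam => christoffel g ginv σ κ lam (c t))
      (fun κ μ ν => pd (fun y => K y μ ν) κ (c t))
      (fun μ => deriv (fun s => c s μ) t)
      (fun μ => deriv (deriv (fun s => c s μ)) t)
      (deriv n t / n t)
      (fun μ ν => hK_symm (c t) μ ν) hKill' hA'
    have hn2 : HasDerivAt (fun t' => n t' ^ 2) (2 * n t ^ 1 * deriv n t) t := hnd.pow 2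
    have hdiv := hE.div hn2 (pow_ne_zero 2 hnne)
    have hzero : ((∑ μ, ∑ ν,
        (((∑ σ, deriv (fun s => c s σ) t * pd (fun y => K y μ ν) σ (c t))
            * deriv (fun s => c s μ) t
          + K (c t) μ ν * deriv (deriv (fun s => c s μ)) t) * deriv (fun s => c s ν) t
        + K (c t) μ ν * deriv (fun s => c s μ) t * deriv (deriv (fun s => c s ν)) t))
        * n t ^ 2 - E t * (2 * n t ^ 1 * deriv n t)) / (n t ^ 2) ^ 2 = 0 := by
      rw [hkey, hEdef]
      field_simp
      ring
    rw [hzero] at hdiv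
    exact hdiv
  have hdiffOn : DifferentiableOn ℝ F (Set.Ioo a b) := fun t ht =>
    (key t ht).differentiableAt.differentiableWithinAt
  have hfz : ∀ t ∈ Set.Ioo a b, fderivWithin ℝ F (Set.Ioo a b) t = 0 := by
    intro t ht
    rw [fderivWithin_of_isOpen isOpen_Ioo ht, (key t ht).hasFDerivAt.fderiv]
    ext
    simp
  exact (convex_Ioo a b).is_const_of_fderivWithin_eq_zero hdiffOn hfz ht₁ ht₂
end

section
/- Let g be a metric on ℝ^N with Christoffel symbols Γ, and let K be a smooth symmetric 2-tensor field that is covariantly constant, ∇_κ K_{μν} = 0 identically. Let b ∈ (0,1), M > 0, and let Υ be a smooth vector field and Ω a smooth function on ℝ^N satisfying (L_Υ (g − (b/(1−b))M²K))_{μν} = 2Ω(g_{μν} + M²K_{μν}) everywhere. Let (x,n) : I → ℝ^N × ℝ_{>0} be a solution of the einbein geodesic equations with 𝒦(λ) := Σ K_{αβ}(x)ẋ^αẋ^β > 0 and 𝒢(λ) := −Σ g_{αβ}(x)ẋ^αẋ^β > 0 on I, and suppose 𝒢(λ₀) = M²·𝒦(λ₀) at some λ₀ ∈ I. Define the Bogoslovsky–Finsler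 momenta p_μ(λ) = (1/n)[(1−b)·𝒦^b·𝒢^{−b}·Σ_ν g_{μν}(x)ẋ^ν − b·𝒦^{b−1}·𝒢^{1−b}·Σ_ν K_{μν}(x)ẋ^ν]. Then the function λ ↦ Σ_μ Υ^μ(x(λ)) p_μ(λ) is constant on I. -/
/-- Lie derivative of a covariant 2-tensor field `T` along the vector field `V`. -/
noncomputable def lieD {N : ℕ} (V : (Fin N → ℝ) → Fin N → ℝ)
    (T : (Fin N → ℝ) → Fin N → Fin N → ℝ) (x : Fin N → ℝ) (μ ν : Fin N) : ℝ :=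
  ∑ σ, (V x σ * pd (fun y => T y μ ν) σ x
    + T x σ ν * pd (fun y => V y σ) μ x
    + T x μ σ * pd (fun y => V y σ) ν x)

open Set Finset


/-- chain rule along a curve -/
theorem chainRule {N : ℕ} {f : (Fin N → ℝ) → ℝ} (hf : ContDiff ℝ (⊤ : ℕ∞) f)
    {c : ℝ → Fin N → ℝ} {c' : Fin N → ℝ} {t : ℝ}
    (hc : ∀ μ, HasDerivAt (fun s => c s μ) (c' μ) t) :
    HasDerivAt (fun s => f (c s)) (∑ σ, pd f σ (c t) * c' σ) t := by
  have hcurve : HasDerivAt c c' t := hasDerivAt_pi.2 hc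
  have hfd : HasFDerivAt f (fderiv ℝ f (c t)) (c t) :=
    (hf.differentiable (by simp) (c t)).hasFDerivAt
  have h := hfd.comp_hasDerivAt t hcurve
  refine h.congr_deriv ?_
  have hv : c' = ∑ σ : Fin N, c' σ • (Pi.single σ 1 : Fin N → ℝ) := by
    ext j
    simp [Finset.sum_apply, Pi.single_apply, eq_comm]
  have h2 : (fderiv ℝ f (c t)) c' = ∑ σ, c' σ * (fderiv ℝ f (c t)) (Pi.single σ 1) := by
    conv_lhs => rw [hv]
    rw [map_sum]
    simp [smul_eq_mul]
  rw [h2]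
  exact Finset.sum_congr rfl fun σ _ => by rw [pd, mul_comm]

theorem pd_sub_const_mul {N : ℕ} {f k : (Fin N → ℝ) → ℝ} (hf : ContDiff ℝ (⊤ : ℕ∞) f)
    (hk : ContDiff ℝ (⊤ : ℕ∞) k) (a : ℝ) (i : Fin N) (x : Fin N → ℝ) :
    pd (fun y => f y - a * k y) i x = pd f i x - a * pd k i x := by
  unfold pd
  rw [fderiv_fun_sub (hf.differentiable (by simp) x) ((hk.differentiable (by simp) x).const_mul a)]
  rw [fderiv_const_mul (hk.differentiable (by simp) x)]
  simp

theorem s12 {N : ℕ} (F : Fin N → Fin N → Fin N → Fin N → ℝ) :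
    ∑ a, ∑ b, ∑ c, ∑ d, F a b c d = ∑ b, ∑ a, ∑ c, ∑ d, F a b c d := Finset.sum_comm

theorem s23 {N : ℕ} (F : Fin N → Fin N → Fin N → Fin N → ℝ) :
    ∑ a, ∑ b, ∑ c, ∑ d, F a b c d = ∑ a, ∑ c, ∑ b, ∑ d, F a b c d :=
  Finset.sum_congr rfl fun _ _ => Finset.sum_comm

theorem s34 {N : ℕ} (F : Fin N → Fin N → Fin N → Fin N → ℝ) :
    ∑ a, ∑ b, ∑ c, ∑ d, F a b c d = ∑ a, ∑ b, ∑ d, ∑ c, F a b c d :=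
  Finset.sum_congr rfl fun _ _ => Finset.sum_congr rfl fun _ _ => Finset.sum_comm


theorem christoffel_contract {N : ℕ} (g ginv : (Fin N → ℝ) → Fin N → Fin N → ℝ)
    (hg_symm : ∀ x μ ν, g x μ ν = g x ν μ)
    (h_inv : ∀ x μ ν, (∑ σ, g x μ σ * ginv x σ ν) = if μ = ν then (1 : ℝ) else 0)
    (x : Fin N → ℝ) (κ μ ν : Fin N) :
    ∑ σ, christoffel g ginv σ κ μ x * g x σ ν
      = (1/2) * (pd (fun y => g y ν μ) κ x + pd (fun y => g y κ ν) μ x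
          - pd (fun y => g y κ μ) ν x) := by
  set A : Fin N → ℝ := fun ρ =>
    pd (fun y => g y ρ μ) κ x + pd (fun y => g y κ ρ) μ x - pd (fun y => g y κ μ) ρ x with hA
  have step1 : ∑ σ, christoffel g ginv σ κ μ x * g x σ ν
      = (1/2) * ∑ σ, ∑ ρ, g x ν σ * ginv x σ ρ * A ρ := by
    rw [Finset.mul_sum]
    refine Finset.sum_congr rfl fun σ _ => ?_
    rw [christoffel, Finset.mul_sum, Finset.mul_sum, Finset.sum_mul]
    refine Finset.sum_congr rfl fun ρ _ => ?_
    rw [hg_symm x σ ν]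
    ring
  rw [step1, Finset.sum_comm]
  have step2 : ∀ ρ, ∑ σ, g x ν σ * ginv x σ ρ * A ρ = (if ν = ρ then (1:ℝ) else 0) * A ρ := by
    intro ρ
    rw [← Finset.sum_mul, h_inv]
  simp_rw [step2]
  simp [ite_mul, A]

theorem nabla_g {N : ℕ} (g ginv : (Fin N → ℝ) → Fin N → Fin N → ℝ)
    (hg_symm : ∀ x μ ν, g x μ ν = g x ν μ)
    (h_inv : ∀ x μ ν, (∑ σ, g x μ σ * ginv x σ ν) = if μ = ν then (1 : ℝ) else 0)
    (x : Fin N → ℝ) (κ μ ν : Fin N) :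
    covD g ginv g κ μ ν x = 0 := by
  rw [covD]
  rw [Finset.sum_add_distrib]
  have h2 : ∑ σ, christoffel g ginv σ κ ν x * g x μ σ
      = ∑ σ, christoffel g ginv σ κ ν x * g x σ μ := by
    exact Finset.sum_congr rfl fun σ _ => by rw [hg_symm x μ σ]
  rw [h2, christoffel_contract g ginv hg_symm h_inv x κ μ ν,
    christoffel_contract g ginv hg_symm h_inv x κ ν μ]
  have e1 : (fun y => g y ν μ) = (fun y => g y μ ν) := funext fun y => hg_symm y ν μ
  have e2 : (fun y => g y κ ν) = (fun y => g y ν κ) := funext fun y => hg_symm y κ ν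
  have e3 : (fun y => g y κ μ) = (fun y => g y μ κ) := funext fun y => hg_symm y κ μ
  rw [e1, e2, e3]
  ring

theorem sum4_prod {N : ℕ} (G : Fin N → Fin N → Fin N → Fin N → ℝ) :
    ∑ a, ∑ b, ∑ c, ∑ d, G a b c d
      = ∑ p : Fin N × Fin N × Fin N × Fin N, G p.1 p.2.1 p.2.2.1 p.2.2.2 := by
  simp [Fintype.sum_prod_type]

theorem sum4_equiv {N : ℕ} (F G : Fin N → Fin N → Fin N → Fin N → ℝ)
    (π : (Fin N × Fin N × Fin N × Fin N) → (Fin N × Fin N × Fin N × Fin N))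
    (hπ : Function.Involutive π)
    (h : ∀ a b c d, F a b c d
      = G (π (a,b,c,d)).1 (π (a,b,c,d)).2.1 (π (a,b,c,d)).2.2.1 (π (a,b,c,d)).2.2.2) :
    ∑ a, ∑ b, ∑ c, ∑ d, F a b c d = ∑ a, ∑ b, ∑ c, ∑ d, G a b c d := by
  rw [sum4_prod, sum4_prod]
  refine Fintype.sum_equiv hπ.toPerm _ _ fun p => ?_
  have := h p.1 p.2.1 p.2.2.1 p.2.2.2
  simpa [Function.Involutive.toPerm] using this

theorem alg1 {N : ℕ} (Γ : Fin N → Fin N → Fin N → ℝ) (T : Fin N → Fin N → ℝ)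
    (Tp : Fin N → Fin N → Fin N → ℝ) (v a : Fin N → ℝ) (r : ℝ)
    (ha : ∀ μ, a μ = v μ * r - ∑ κ, ∑ σ, Γ μ κ σ * v κ * v σ)
    (hTp : ∀ κ α β, Tp κ α β = ∑ σ, (Γ σ κ α * T σ β + Γ σ κ β * T α σ)) :
    ∑ α, ∑ β, (((∑ κ, Tp κ α β * v κ) * v α + T α β * a α) * v β + T α β * v α * a β)
      = 2 * (∑ α, ∑ β, T α β * v α * v β) * r := by
  have key : ∀ α β, ((∑ κ, Tp κ α β * v κ) * v α + T α β * a α) * v β + T α β * v α * a β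
      = (∑ κ, ∑ σ, Γ σ κ α * T σ β * (v κ * v α * v β))
        + (∑ κ, ∑ σ, Γ σ κ β * T α σ * (v κ * v α * v β))
        - (∑ κ, ∑ σ, Γ α κ σ * T α β * (v κ * v σ * v β))
        - (∑ κ, ∑ σ, Γ β κ σ * T α β * (v κ * v σ * v α))
        + 2 * (T α β * v α * v β) * r := by
    intro α β
    simp only [hTp, ha]
    simp only [Finset.sum_add_distrib, Finset.sum_mul, Finset.mul_sum, mul_sub, sub_mul,
      add_mul, mul_add, Finset.sum_sub_distrib]
    ring_nf
    have r1 : ∀ x i : Fin N, T α β * (Γ α x i * v x * v i) * v β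
        = Γ α x i * T α β * v x * v i * v β := fun x i => by ring
    have r2 : ∀ x i : Fin N, T α β * v α * (Γ β x i * v x * v i)
        = Γ β x i * T α β * v x * v i * v α := fun x i => by ring
    simp only [mul_comm, mul_left_comm, mul_assoc]
    ring
  simp_rw [key]
  simp only [Finset.sum_add_distrib, Finset.sum_sub_distrib]
  have h13 : ∑ α, ∑ β, ∑ κ, ∑ σ, Γ σ κ α * T σ β * (v κ * v α * v β)
      = ∑ α, ∑ β, ∑ κ, ∑ σ, Γ α κ σ * T α β * (v κ * v σ * v β) := by
    refine sum4_equiv _ _ (fun p => (p.2.2.2, p.2.1, p.2.2.1, p.1)) (fun p => rfl) ?_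
    intro a b c d
    ring
  have h24 : ∑ α, ∑ β, ∑ κ, ∑ σ, Γ σ κ β * T α σ * (v κ * v α * v β)
      = ∑ α, ∑ β, ∑ κ, ∑ σ, Γ β κ σ * T α β * (v κ * v σ * v α) := by
    refine sum4_equiv _ _ (fun p => (p.1, p.2.2.2, p.2.2.1, p.2.1)) (fun p => rfl) ?_
    intro a b c d
    ring
  rw [h13, h24]
  rw [show ∀ x y z : ℝ, x + y - x - y + z = z from fun x y z => by ring]
  rw [Finset.mul_sum, Finset.sum_mul]
  congr 1
  ext α
  rw [Finset.mul_sum, Finset.sum_mul]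

theorem sum4_equiv' {N : ℕ} (F G : Fin N → Fin N → Fin N → Fin N → ℝ)
    (e : (Fin N × Fin N × Fin N × Fin N) ≃ (Fin N × Fin N × Fin N × Fin N))
    (h : ∀ a b c d, F a b c d
      = G (e (a,b,c,d)).1 (e (a,b,c,d)).2.1 (e (a,b,c,d)).2.2.1 (e (a,b,c,d)).2.2.2) :
    ∑ a, ∑ b, ∑ c, ∑ d, F a b c d = ∑ a, ∑ b, ∑ c, ∑ d, G a b c d := by
  rw [sum4_prod, sum4_prod]
  refine Fintype.sum_equiv e _ _ fun p => ?_
  exact (h p.1 p.2.1 p.2.2.1 p.2.2.2).symm ▸ rfl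

theorem sum3_prod {N : ℕ} (G : Fin N → Fin N → Fin N → ℝ) :
    ∑ a, ∑ b, ∑ c, G a b c = ∑ p : Fin N × Fin N × Fin N, G p.1 p.2.1 p.2.2 := by
  simp [Fintype.sum_prod_type]

theorem sum3_equiv {N : ℕ} (F G : Fin N → Fin N → Fin N → ℝ)
    (e : (Fin N × Fin N × Fin N) ≃ (Fin N × Fin N × Fin N))
    (h : ∀ a b c, F a b c = G (e (a,b,c)).1 (e (a,b,c)).2.1 (e (a,b,c)).2.2) :
    ∑ a, ∑ b, ∑ c, F a b c = ∑ a, ∑ b, ∑ c, G a b c := by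
  rw [sum3_prod, sum3_prod]
  refine Fintype.sum_equiv e _ _ fun p => ?_
  exact (h p.1 p.2.1 p.2.2).symm ▸ rfl

theorem alg2 {N : ℕ} (Γ : Fin N → Fin N → Fin N → ℝ) (G : Fin N → Fin N → ℝ)
    (U : Fin N → ℝ) (Up : Fin N → Fin N → ℝ) (Gp : Fin N → Fin N → Fin N → ℝ)
    (E : Fin N → Fin N → ℝ) (v a : Fin N → ℝ) (r : ℝ)
    (ha : ∀ μ, a μ = v μ * r - ∑ κ, ∑ σ, Γ μ κ σ * v κ * v σ)
    (hGp : ∀ κ μ ν, Gp κ μ ν = ∑ σ, (Γ σ κ μ * G σ ν + Γ σ κ ν * G μ σ))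
    (hGsym : ∀ μ ν, G μ ν = G ν μ)
    (hΓsym : ∀ μ κ lam, Γ μ κ lam = Γ μ lam κ)
    (hLie : ∀ κ ν, (∑ σ, (U σ * Gp σ κ ν + G σ ν * Up κ σ + G κ σ * Up ν σ)) = E κ ν) :
    ∑ ν, ((∑ κ, (∑ μ, (Up κ μ * G μ ν + U μ * Gp κ μ ν)) * v κ) * v ν
        + (∑ μ, U μ * G μ ν) * a ν)
      = (1/2) * (∑ κ, ∑ ν, E κ ν * (v κ * v ν))
        + r * (∑ ν, (∑ μ, U μ * G μ ν) * v ν) := by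
  -- expand the LHS
  have key1 : ∀ ν, (∑ κ, (∑ μ, (Up κ μ * G μ ν + U μ * Gp κ μ ν)) * v κ) * v ν
        + (∑ μ, U μ * G μ ν) * a ν
      = (∑ κ, ∑ μ, Up κ μ * G μ ν * (v κ * v ν))
        + (∑ κ, ∑ μ, ∑ σ, Γ σ κ μ * U μ * G σ ν * (v κ * v ν))
        + (∑ κ, ∑ μ, ∑ σ, Γ σ κ ν * U μ * G μ σ * (v κ * v ν))
        - (∑ κ, ∑ σ, ∑ μ, Γ ν κ σ * U μ * G μ ν * (v κ * v σ))
        + ((∑ μ, U μ * G μ ν) * v ν) * r := by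
    intro ν
    simp only [hGp, ha]
    simp only [Finset.sum_add_distrib, Finset.sum_mul, Finset.mul_sum, mul_sub, sub_mul,
      add_mul, mul_add, Finset.sum_sub_distrib]
    ring_nf
    have c1 : ∀ x x1 x2 : Fin N, U x1 * Γ x2 x x1 * G x2 ν * v x * v ν
        = Γ x2 x x1 * U x1 * G x2 ν * v x * v ν := by intros; ring
    have c2 : ∀ x x1 x2 : Fin N, U x1 * Γ x2 x ν * G x1 x2 * v x * v ν
        = Γ x2 x ν * U x1 * G x1 x2 * v x * v ν := by intros; ring
    have c3 : ∀ x x1 x2 : Fin N, U x2 * G x2 ν * Γ ν x x1 * v x * v x1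
        = Γ ν x x1 * U x2 * G x2 ν * v x * v x1 := by intros; ring
    simp only [mul_comm, mul_left_comm, mul_assoc]
    ring
  have key2 : ∀ κ ν, E κ ν * (v κ * v ν)
      = (∑ σ, ∑ ρ, Γ ρ σ κ * U σ * G ρ ν * (v κ * v ν))
        + (∑ σ, ∑ ρ, Γ ρ σ ν * U σ * G κ ρ * (v κ * v ν))
        + (∑ σ, G σ ν * Up κ σ * (v κ * v ν))
        + (∑ σ, G κ σ * Up ν σ * (v κ * v ν)) := by
    intro κ ν
    rw [← hLie]
    simp only [hGp]
    simp only [Finset.sum_add_distrib, Finset.sum_mul, Finset.mul_sum, add_mul, mul_add]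
    ring_nf
    have c1 : ∀ x x1 : Fin N, U x * Γ x1 x κ * G x1 ν * v κ * v ν
        = Γ x1 x κ * U x * G x1 ν * v κ * v ν := by intros; ring
    have c2 : ∀ x x1 : Fin N, U x * Γ x1 x ν * G κ x1 * v κ * v ν
        = Γ x1 x ν * U x * G κ x1 * v κ * v ν := by intros; ring
    simp only [mul_comm, mul_left_comm, mul_assoc]
    ring
  simp_rw [key1, key2]
  simp only [Finset.sum_add_distrib, Finset.sum_sub_distrib]
  have hQ2b : ∑ ν, ∑ κ, ∑ μ, ∑ σ, Γ σ κ ν * U μ * G μ σ * (v κ * v ν)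
      = ∑ ν, ∑ κ, ∑ σ, ∑ μ, Γ ν κ σ * U μ * G μ ν * (v κ * v σ) := by
    refine sum4_equiv' _ _ ⟨fun p => (p.2.2.2, p.2.1, p.1, p.2.2.1),
      fun p => (p.2.2.1, p.2.1, p.2.2.2, p.1), fun p => rfl, fun p => rfl⟩ ?_
    intro a b c d
    dsimp only [Equiv.coe_fn_mk]
  have hQ2a : ∑ ν, ∑ κ, ∑ μ, ∑ σ, Γ σ κ μ * U μ * G σ ν * (v κ * v ν)
      = ∑ κ, ∑ ν, ∑ σ, ∑ ρ, Γ ρ σ κ * U σ * G ρ ν * (v κ * v ν) := by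
    refine sum4_equiv' _ _ ⟨fun p => (p.2.1, p.1, p.2.2.1, p.2.2.2),
      fun p => (p.2.1, p.1, p.2.2.1, p.2.2.2), fun p => rfl, fun p => rfl⟩ ?_
    intro a b c d
    dsimp only [Equiv.coe_fn_mk]
    rw [hΓsym d b c]
  have hQ1 : ∑ ν, ∑ κ, ∑ μ, Up κ μ * G μ ν * (v κ * v ν)
      = ∑ κ, ∑ ν, ∑ σ, G σ ν * Up κ σ * (v κ * v ν) := by
    refine sum3_equiv _ _ ⟨fun p => (p.2.1, p.1, p.2.2),
      fun p => (p.2.1, p.1, p.2.2), fun p => rfl, fun p => rfl⟩ ?_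
    intro a b c
    dsimp only [Equiv.coe_fn_mk]
    ring
  have hB21 : ∑ κ, ∑ ν, ∑ σ, ∑ ρ, Γ ρ σ ν * U σ * G κ ρ * (v κ * v ν)
      = ∑ κ, ∑ ν, ∑ σ, ∑ ρ, Γ ρ σ κ * U σ * G ρ ν * (v κ * v ν) := by
    refine sum4_equiv' _ _ ⟨fun p => (p.2.1, p.1, p.2.2.1, p.2.2.2),
      fun p => (p.2.1, p.1, p.2.2.1, p.2.2.2), fun p => rfl, fun p => rfl⟩ ?_
    intro a b c d
    dsimp only [Equiv.coe_fn_mk]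
    rw [hGsym a d]
    ring
  have hB43 : ∑ κ, ∑ ν, ∑ σ, G κ σ * Up ν σ * (v κ * v ν)
      = ∑ κ, ∑ ν, ∑ σ, G σ ν * Up κ σ * (v κ * v ν) := by
    refine sum3_equiv _ _ ⟨fun p => (p.2.1, p.1, p.2.2),
      fun p => (p.2.1, p.1, p.2.2), fun p => rfl, fun p => rfl⟩ ?_
    intro a b c
    dsimp only [Equiv.coe_fn_mk]
    rw [hGsym a c]
    ring
  have hR : ∑ ν, ((∑ μ, U μ * G μ ν) * v ν) * r
      = r * ∑ ν, (∑ μ, U μ * G μ ν) * v ν := by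
    rw [Finset.mul_sum]
    exact Finset.sum_congr rfl fun ν _ => by ring
  rw [hQ2b, hQ2a, hQ1, hB21, hB43, hR]
  ring

theorem pd_mul {N : ℕ} {f k : (Fin N → ℝ) → ℝ} (hf : ContDiff ℝ (⊤ : ℕ∞) f) (hk : ContDiff ℝ (⊤ : ℕ∞) k)
    (i : Fin N) (x : Fin N → ℝ) :
    pd (fun y => f y * k y) i x = pd f i x * k x + f x * pd k i x := by
  unfold pd
  rw [fderiv_fun_mul (hf.differentiable (by simp) x) (hk.differentiable (by simp) x)]
  simp [smul_eq_mul]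
  ring

theorem pd_sum {N : ℕ} {ι : Type*} (s : Finset ι) (F : ι → (Fin N → ℝ) → ℝ)
    (hF : ∀ i, ContDiff ℝ (⊤ : ℕ∞) (F i)) (j : Fin N) (x : Fin N → ℝ) :
    pd (fun y => ∑ i ∈ s, F i y) j x = ∑ i ∈ s, pd (F i) j x := by
  unfold pd
  rw [fderiv_fun_sum (fun i _ => (hF i).differentiable (by simp) x)]
  simp

theorem contraction_deriv {N : ℕ} (T : (Fin N → ℝ) → Fin N → Fin N → ℝ)
    (hT : ∀ μ ν, ContDiff ℝ (⊤ : ℕ∞) (fun x => T x μ ν))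
    {c : ℝ → Fin N → ℝ} {t : ℝ} {v a : Fin N → ℝ}
    (hv : ∀ μ, HasDerivAt (fun s => c s μ) (v μ) t)
    (hvt : ∀ μ, deriv (fun s => c s μ) t = v μ)
    (hva : ∀ μ, HasDerivAt (fun s => deriv (fun r => c r μ) s) (a μ) t) :
    HasDerivAt (fun s => ∑ α, ∑ β, T (c s) α β
        * deriv (fun r => c r α) s * deriv (fun r => c r β) s)
      (∑ α, ∑ β, (((∑ κ, pd (fun y => T y α β) κ (c t) * v κ) * v α + T (c t) α β * a α) * v β
        + T (c t) α β * v α * a β)) t := by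
  apply HasDerivAt.fun_sum
  intro α _
  apply HasDerivAt.fun_sum
  intro β _
  have h1 : HasDerivAt (fun s => T (c s) α β) (∑ κ, pd (fun y => T y α β) κ (c t) * v κ) t :=
    chainRule (hT α β) hv
  have h2 := (h1.fun_mul (hva α)).fun_mul (hva β)
  rw [hvt α, hvt β] at h2
  exact h2

theorem covD_sub {N : ℕ} (g ginv K : (Fin N → ℝ) → Fin N → Fin N → ℝ)
    (hg_smooth : ∀ μ ν, ContDiff ℝ (⊤ : ℕ∞) (fun x => g x μ ν))
    (hK_smooth : ∀ μ ν, ContDiff ℝ (⊤ : ℕ∞) (fun x => K x μ ν)) (q : ℝ) (κ μ ν : Fin N)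
    (x : Fin N → ℝ) :
    covD g ginv (fun y μ' ν' => g y μ' ν' - q * K y μ' ν') κ μ ν x
      = covD g ginv g κ μ ν x - q * covD g ginv K κ μ ν x := by
  unfold covD
  rw [pd_sub_const_mul (hg_smooth μ ν) (hK_smooth μ ν) q κ x]
  beta_reduce
  have hsum : ∑ σ : Fin N, (christoffel g ginv σ κ μ x * (g x σ ν - q * K x σ ν)
      + christoffel g ginv σ κ ν x * (g x μ σ - q * K x μ σ))
    = ∑ σ : Fin N, ((christoffel g ginv σ κ μ x * g x σ ν + christoffel g ginv σ κ ν x * g x μ σ)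
      - q * (christoffel g ginv σ κ μ x * K x σ ν + christoffel g ginv σ κ ν x * K x μ σ)) :=
    Finset.sum_congr rfl fun σ _ => by ring
  rw [hsum, Finset.sum_sub_distrib, ← Finset.mul_sum]
  ring

theorem christoffel_symm {N : ℕ} (g ginv : (Fin N → ℝ) → Fin N → Fin N → ℝ)
    (hg_symm : ∀ x μ ν, g x μ ν = g x ν μ) (μ κ lam : Fin N) (x : Fin N → ℝ) :
    christoffel g ginv μ κ lam x = christoffel g ginv μ lam κ x := by
  unfold christoffel
  congr 1
  refine Finset.sum_congr rfl fun σ _ => ?_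
  have e1 : (fun y => g y σ lam) = (fun y => g y lam σ) := funext fun y => hg_symm y σ lam
  have e2 : (fun y => g y κ σ) = (fun y => g y σ κ) := funext fun y => hg_symm y κ σ
  have e3 : (fun y => g y κ lam) = (fun y => g y lam κ) := funext fun y => hg_symm y κ lam
  rw [e1, e2, e3]
  ring

theorem current_deriv {N : ℕ} (Υ : (Fin N → ℝ) → Fin N → ℝ)
    (G : (Fin N → ℝ) → Fin N → Fin N → ℝ)
    (hΥ : ∀ μ, ContDiff ℝ (⊤ : ℕ∞) (fun x => Υ x μ))
    (hG : ∀ μ ν, ContDiff ℝ (⊤ : ℕ∞) (fun x => G x μ ν))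
    {c : ℝ → Fin N → ℝ} {t : ℝ} {v a : Fin N → ℝ}
    (hv : ∀ μ, HasDerivAt (fun s => c s μ) (v μ) t)
    (hvt : ∀ μ, deriv (fun s => c s μ) t = v μ)
    (hva : ∀ μ, HasDerivAt (fun s => deriv (fun r => c r μ) s) (a μ) t) :
    HasDerivAt (fun s => ∑ ν, (∑ μ, Υ (c s) μ * G (c s) μ ν) * deriv (fun r => c r ν) s)
      (∑ ν, ((∑ κ, (∑ μ, (pd (fun y => Υ y μ) κ (c t) * G (c t) μ ν
            + Υ (c t) μ * pd (fun y => G y μ ν) κ (c t))) * v κ) * v ν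
        + (∑ μ, Υ (c t) μ * G (c t) μ ν) * a ν)) t := by
  apply HasDerivAt.fun_sum
  intro ν _
  have hW : ContDiff ℝ (⊤ : ℕ∞) (fun y => ∑ μ, Υ y μ * G y μ ν) :=
    ContDiff.sum fun μ _ => (hΥ μ).mul (hG μ ν)
  have h1 : HasDerivAt (fun s => ∑ μ, Υ (c s) μ * G (c s) μ ν)
      (∑ κ, pd (fun y => ∑ μ, Υ y μ * G y μ ν) κ (c t) * v κ) t := chainRule hW hv
  have hpd : ∀ κ, pd (fun y => ∑ μ, Υ y μ * G y μ ν) κ (c t)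
      = ∑ μ, (pd (fun y => Υ y μ) κ (c t) * G (c t) μ ν
          + Υ (c t) μ * pd (fun y => G y μ ν) κ (c t)) := by
    intro κ
    rw [pd_sum Finset.univ (fun μ y => Υ y μ * G y μ ν) (fun μ => (hΥ μ).mul (hG μ ν)) κ (c t)]
    exact Finset.sum_congr rfl fun μ _ => pd_mul (hΥ μ) (hG μ ν) κ (c t)
  simp_rw [hpd] at h1
  have h2 := h1.fun_mul (hva ν)
  rw [hvt ν] at h2
  exact h2

theorem cc_pd {N : ℕ} {g ginv T : (Fin N → ℝ) → Fin N → Fin N → ℝ}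
    (h : ∀ x κ μ ν, covD g ginv T κ μ ν x = 0) (x : Fin N → ℝ) (κ μ ν : Fin N) :
    pd (fun y => T y μ ν) κ x
      = ∑ σ, (christoffel g ginv σ κ μ x * T x σ ν + christoffel g ginv σ κ ν x * T x μ σ) := by
  have := h x κ μ ν
  rw [covD, sub_eq_zero] at this
  exact this

theorem const_of_deriv_zero {f : ℝ → ℝ} {a₁ a₂ : ℝ}
    (h : ∀ t ∈ Set.Ioo a₁ a₂, HasDerivAt f 0 t) :
    ∀ t₁ ∈ Set.Ioo a₁ a₂, ∀ t₂ ∈ Set.Ioo a₁ a₂, f t₁ = f t₂ := by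
  have key : ∀ t₁ ∈ Set.Ioo a₁ a₂, ∀ t₂ ∈ Set.Ioo a₁ a₂, t₁ ≤ t₂ → f t₂ = f t₁ := by
    intro t₁ h₁ t₂ h₂ hle
    have hsub : Set.Icc t₁ t₂ ⊆ Set.Ioo a₁ a₂ := fun x hx =>
      ⟨lt_of_lt_of_le h₁.1 hx.1, lt_of_le_of_lt hx.2 h₂.2⟩
    have hcont : ContinuousOn f (Set.Icc t₁ t₂) := fun x hx =>
      ((h x (hsub hx)).differentiableAt.continuousAt).continuousWithinAt
    have hderiv : ∀ x ∈ Set.Ico t₁ t₂, HasDerivWithinAt f 0 (Set.Ici x) x := fun x hx =>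
      (h x (hsub ⟨hx.1, le_of_lt hx.2⟩)).hasDerivWithinAt
    exact constant_of_has_deriv_right_zero hcont hderiv t₂ ⟨hle, le_refl t₂⟩
  intro t₁ h₁ t₂ h₂
  rcases le_total t₁ t₂ with hle | hle
  · exact (key t₁ h₁ t₂ h₂ hle).symm
  · exact key t₂ h₂ t₁ h₁ hle

theorem stmt4 {N : ℕ}
    (g ginv K : (Fin N → ℝ) → Fin N → Fin N → ℝ)
    (hg_smooth : ∀ μ ν, ContDiff ℝ (⊤ : ℕ∞) (fun x => g x μ ν))
    (hg_symm : ∀ x μ ν, g x μ ν = g x ν μ)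
    (hginv_smooth : ∀ μ ν, ContDiff ℝ (⊤ : ℕ∞) (fun x => ginv x μ ν))
    (h_inv : ∀ x μ ν, (∑ σ, g x μ σ * ginv x σ ν) = if μ = ν then (1 : ℝ) else 0)
    (hK_smooth : ∀ μ ν, ContDiff ℝ (⊤ : ℕ∞) (fun x => K x μ ν))
    (hK_symm : ∀ x μ ν, K x μ ν = K x ν μ)
    (hKcc : ∀ x κ μ ν, covD g ginv K κ μ ν x = 0)
    (b M : ℝ) (hb0 : 0 < b) (hb1 : b < 1) (hM : 0 < M)
    (Υ : (Fin N → ℝ) → Fin N → ℝ) (Ω : (Fin N → ℝ) → ℝ)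
    (hΥ_smooth : ∀ μ, ContDiff ℝ (⊤ : ℕ∞) (fun x => Υ x μ))
    (hΩ_smooth : ContDiff ℝ (⊤ : ℕ∞) Ω)
    (hdisf : ∀ x μ ν,
      lieD Υ (fun y μ' ν' => g y μ' ν' - (b / (1 - b)) * M ^ 2 * K y μ' ν') x μ ν
        = 2 * Ω x * (g x μ ν + M ^ 2 * K x μ ν))
    (a₁ a₂ : ℝ) (c : ℝ → Fin N → ℝ) (n : ℝ → ℝ)
    (hc : ∀ μ, ContDiffOn ℝ (⊤ : ℕ∞) (fun t => c t μ) (Set.Ioo a₁ a₂))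
    (hn : ContDiffOn ℝ (⊤ : ℕ∞) n (Set.Ioo a₁ a₂))
    (hnpos : ∀ t ∈ Set.Ioo a₁ a₂, 0 < n t)
    (hgeo : ∀ t ∈ Set.Ioo a₁ a₂, ∀ μ,
      deriv (fun s => deriv (fun r => c r μ) s) t
        + (∑ κ, ∑ σ, christoffel g ginv μ κ σ (c t)
            * deriv (fun s => c s κ) t * deriv (fun s => c s σ) t)
      = deriv (fun s => c s μ) t * deriv n t / n t)
    (𝒦 𝒢 : ℝ → ℝ)
    (h𝒦 : 𝒦 = fun t => ∑ α, ∑ β, K (c t) α β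
        * deriv (fun s => c s α) t * deriv (fun s => c s β) t)
    (h𝒢 : 𝒢 = fun t => -∑ α, ∑ β, g (c t) α β
        * deriv (fun s => c s α) t * deriv (fun s => c s β) t)
    (h𝒦pos : ∀ t ∈ Set.Ioo a₁ a₂, 0 < 𝒦 t)
    (h𝒢pos : ∀ t ∈ Set.Ioo a₁ a₂, 0 < 𝒢 t)
    (lam₀ : ℝ) (hlam₀ : lam₀ ∈ Set.Ioo a₁ a₂) (hM𝒦 : 𝒢 lam₀ = M ^ 2 * 𝒦 lam₀)
    (p : Fin N → ℝ → ℝ)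
    (hp : p = fun μ t => (1 / n t) *
      ((1 - b) * 𝒦 t ^ b * 𝒢 t ^ (-b)
          * (∑ ν, g (c t) μ ν * deriv (fun s => c s ν) t)
        - b * 𝒦 t ^ (b - 1) * 𝒢 t ^ (1 - b)
          * (∑ ν, K (c t) μ ν * deriv (fun s => c s ν) t))) :
    ∀ t₁ ∈ Set.Ioo a₁ a₂, ∀ t₂ ∈ Set.Ioo a₁ a₂,
      (∑ μ, Υ (c t₁) μ * p μ t₁) = ∑ μ, Υ (c t₂) μ * p μ t₂ := by
  have hIopen : IsOpen (Set.Ioo a₁ a₂) := isOpen_Ioo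
  -- first and second derivatives of the curve, derivative of n
  have hv : ∀ t ∈ Set.Ioo a₁ a₂, ∀ μ,
      HasDerivAt (fun s => c s μ) (deriv (fun s => c s μ) t) t := fun t ht μ =>
    (((hc μ).contDiffAt (hIopen.mem_nhds ht)).differentiableAt (by simp)).hasDerivAt
  have hcd : ∀ μ, ContDiffOn ℝ (⊤ : ℕ∞) (deriv (fun s => c s μ)) (Set.Ioo a₁ a₂) :=
    fun μ => (hc μ).deriv_of_isOpen hIopen (by simp)
  have hva : ∀ t ∈ Set.Ioo a₁ a₂, ∀ μ, HasDerivAt (fun s => deriv (fun r => c r μ) s)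
      (deriv (fun s => deriv (fun r => c r μ) s) t) t := fun t ht μ =>
    (((hcd μ).contDiffAt (hIopen.mem_nhds ht)).differentiableAt (by simp)).hasDerivAt
  have hnd : ∀ t ∈ Set.Ioo a₁ a₂, HasDerivAt n (deriv n t) t := fun t ht =>
    ((hn.contDiffAt (hIopen.mem_nhds ht)).differentiableAt (by simp)).hasDerivAt
  -- geodesic equation in solved form
  have hacc : ∀ t ∈ Set.Ioo a₁ a₂, ∀ μ, deriv (fun s => deriv (fun r => c r μ) s) t
      = deriv (fun s => c s μ) t * (deriv n t / n t)
        - ∑ κ, ∑ σ, christoffel g ginv μ κ σ (c t)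
            * deriv (fun s => c s κ) t * deriv (fun s => c s σ) t := by
    intro t ht μ
    have h := hgeo t ht μ
    rw [mul_div_assoc] at h
    linarith
  -- ODEs for 𝒦 and 𝒢
  have hKd : ∀ t ∈ Set.Ioo a₁ a₂,
      HasDerivAt 𝒦 (2 * 𝒦 t * (deriv n t / n t)) t := by
    intro t ht
    have hd := contraction_deriv K hK_smooth (hv t ht) (fun μ => rfl) (hva t ht)
    rw [alg1 (fun μ κ σ => christoffel g ginv μ κ σ (c t)) (fun α β => K (c t) α β)
      (fun κ α β => pd (fun y => K y α β) κ (c t)) (fun μ => deriv (fun s => c s μ) t)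
      (fun μ => deriv (fun s => deriv (fun r => c r μ) s) t) (deriv n t / n t)
      (fun μ => hacc t ht μ) (fun κ α β => cc_pd hKcc (c t) κ α β)] at hd
    rw [h𝒦]
    convert hd using 2
  have hGd : ∀ t ∈ Set.Ioo a₁ a₂,
      HasDerivAt 𝒢 (2 * 𝒢 t * (deriv n t / n t)) t := by
    intro t ht
    have hgcc : ∀ x κ μ ν, covD g ginv g κ μ ν x = 0 := fun x κ μ ν =>
      nabla_g g ginv hg_symm h_inv x κ μ ν
    have hd := contraction_deriv g hg_smooth (hv t ht) (fun μ => rfl) (hva t ht)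
    rw [alg1 (fun μ κ σ => christoffel g ginv μ κ σ (c t)) (fun α β => g (c t) α β)
      (fun κ α β => pd (fun y => g y α β) κ (c t)) (fun μ => deriv (fun s => c s μ) t)
      (fun μ => deriv (fun s => deriv (fun r => c r μ) s) t) (deriv n t / n t)
      (fun μ => hacc t ht μ) (fun κ α β => cc_pd hgcc (c t) κ α β)] at hd
    rw [h𝒢]
    have hd2 := hd.fun_neg
    refine hd2.congr_deriv ?_
    beta_reduce
    ring
  -- conservation of 𝒦 / n², 𝒢 / n² and hence 𝒢 = M²𝒦 everywhere
  have hMK : ∀ t ∈ Set.Ioo a₁ a₂, 𝒢 t = M ^ 2 * 𝒦 t := by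
    have hratio : ∀ (f : ℝ → ℝ),
        (∀ t ∈ Set.Ioo a₁ a₂, HasDerivAt f (2 * f t * (deriv n t / n t)) t) →
        ∀ t ∈ Set.Ioo a₁ a₂, f t * n lam₀ ^ 2 = f lam₀ * n t ^ 2 := by
      intro f hf t ht
      have hz : ∀ s ∈ Set.Ioo a₁ a₂, HasDerivAt (fun u => f u / n u ^ 2) 0 s := by
        intro s hs
        have hns : n s ≠ 0 := ne_of_gt (hnpos s hs)
        have h1 := (hf s hs).fun_div ((hnd s hs).fun_pow 2) (pow_ne_zero 2 hns)
        refine h1.congr_deriv ?_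
        field_simp
        ring
      have hcc := const_of_deriv_zero hz t ht lam₀ hlam₀
      have hnt : n t ≠ 0 := ne_of_gt (hnpos t ht)
      have hnl : n lam₀ ≠ 0 := ne_of_gt (hnpos lam₀ hlam₀)
      field_simp at hcc
      linear_combination hcc
    intro t ht
    have e1 := hratio 𝒦 hKd t ht
    have e2 := hratio 𝒢 hGd t ht
    have hnl : n lam₀ ≠ 0 := ne_of_gt (hnpos lam₀ hlam₀)
    have h3 : 𝒢 t * n lam₀ ^ 2 = (M ^ 2 * 𝒦 t) * n lam₀ ^ 2 := by
      linear_combination e2 + n t ^ 2 * hM𝒦 - M ^ 2 * e1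
    exact mul_right_cancel₀ (pow_ne_zero 2 hnl) h3
  -- the deformed tensor G and its conserved current S
  set A : ℝ := (M ^ 2 : ℝ) ^ (-b) with hA
  have hb' : (1:ℝ) - b ≠ 0 := by linarith
  have hM2 : (0:ℝ) < M ^ 2 := by positivity
  have hGf_smooth : ∀ μ ν, ContDiff ℝ (⊤ : ℕ∞)
      (fun x => g x μ ν - (b / (1 - b)) * M ^ 2 * K x μ ν) := fun μ ν =>
    (hg_smooth μ ν).sub (contDiff_const.mul (hK_smooth μ ν))
  have hGfcc : ∀ x κ μ ν, covD g ginv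
      (fun y μ' ν' => g y μ' ν' - (b / (1 - b)) * M ^ 2 * K y μ' ν') κ μ ν x = 0 := by
    intro x κ μ ν
    rw [covD_sub g ginv K hg_smooth hK_smooth ((b / (1 - b)) * M ^ 2) κ μ ν x,
      nabla_g g ginv hg_symm h_inv x κ μ ν, hKcc x κ μ ν]
    ring
  set S : ℝ → ℝ := fun t => ∑ ν, (∑ μ, Υ (c t) μ *
      (g (c t) μ ν - (b / (1 - b)) * M ^ 2 * K (c t) μ ν)) * deriv (fun s => c s ν) t with hS
  have hSd : ∀ t ∈ Set.Ioo a₁ a₂, HasDerivAt S (deriv n t / n t * S t) t := by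
    intro t ht
    have hd := current_deriv Υ (fun y μ' ν' => g y μ' ν' - (b / (1 - b)) * M ^ 2 * K y μ' ν')
      hΥ_smooth hGf_smooth (hv t ht) (fun μ => rfl) (hva t ht)
    rw [alg2 (fun μ κ σ => christoffel g ginv μ κ σ (c t))
      (fun μ ν => g (c t) μ ν - (b / (1 - b)) * M ^ 2 * K (c t) μ ν)
      (fun μ => Υ (c t) μ) (fun κ σ => pd (fun y => Υ y σ) κ (c t))
      (fun κ μ ν => pd (fun y => g y μ ν - (b / (1 - b)) * M ^ 2 * K y μ ν) κ (c t))
      (fun κ ν => 2 * Ω (c t) * (g (c t) κ ν + M ^ 2 * K (c t) κ ν))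
      (fun μ => deriv (fun s => c s μ) t) (fun μ => deriv (fun s => deriv (fun r => c r μ) s) t)
      (deriv n t / n t) (hacc t ht) (fun κ μ ν => cc_pd hGfcc (c t) κ μ ν)
      (fun μ ν => by rw [hg_symm (c t) μ ν, hK_symm (c t) μ ν])
      (fun μ κ lam => christoffel_symm g ginv hg_symm μ κ lam (c t))
      (fun κ ν => by have h := hdisf (c t) κ ν; rw [lieD] at h; exact h)] at hd
    have hE0 : ∑ κ, ∑ ν, (2 * Ω (c t) * (g (c t) κ ν + M ^ 2 * K (c t) κ ν))
        * (deriv (fun s => c s κ) t * deriv (fun s => c s ν) t) = 0 := by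
      have expand : ∑ κ, ∑ ν, (2 * Ω (c t) * (g (c t) κ ν + M ^ 2 * K (c t) κ ν))
          * (deriv (fun s => c s κ) t * deriv (fun s => c s ν) t)
        = 2 * Ω (c t) * ((∑ α, ∑ β, g (c t) α β * deriv (fun s => c s α) t
              * deriv (fun s => c s β) t)
            + M ^ 2 * (∑ α, ∑ β, K (c t) α β * deriv (fun s => c s α) t
              * deriv (fun s => c s β) t)) := by
        simp only [Finset.mul_sum, mul_add, add_mul, Finset.sum_add_distrib]
        congr 1
        · refine Finset.sum_congr rfl fun κ _ => Finset.sum_congr rfl fun ν _ => by ring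
        · refine Finset.sum_congr rfl fun κ _ => Finset.sum_congr rfl fun ν _ => by ring
      rw [expand]
      have hGt : (∑ α, ∑ β, g (c t) α β * deriv (fun s => c s α) t
          * deriv (fun s => c s β) t) = -𝒢 t := by rw [h𝒢]; ring
      have hKt : (∑ α, ∑ β, K (c t) α β * deriv (fun s => c s α) t
          * deriv (fun s => c s β) t) = 𝒦 t := by rw [h𝒦]
      rw [hGt, hKt, hMK t ht]
      ring
    rw [hE0] at hd
    refine hd.congr_deriv ?_
    simp only [hS]
    ring
  -- rewrite the conserved quantity in terms of S
  have hFeq : ∀ t ∈ Set.Ioo a₁ a₂,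
      (∑ μ, Υ (c t) μ * p μ t) = ((1 - b) * A) * (S t / n t) := by
    intro t ht
    have hKpos := h𝒦pos t ht
    have hnt : n t ≠ 0 := ne_of_gt (hnpos t ht)
    have e1 : 𝒦 t ^ b * 𝒢 t ^ (-b) = A := by
      rw [hMK t ht, Real.mul_rpow (le_of_lt hM2) (le_of_lt hKpos)]
      calc 𝒦 t ^ b * ((M ^ 2 : ℝ) ^ (-b) * 𝒦 t ^ (-b))
          = (M ^ 2 : ℝ) ^ (-b) * (𝒦 t ^ b * 𝒦 t ^ (-b)) := by ring
        _ = A := by rw [← Real.rpow_add hKpos]; simp [hA]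
    have e2 : 𝒦 t ^ (b - 1) * 𝒢 t ^ (1 - b) = M ^ 2 * A := by
      rw [hMK t ht, Real.mul_rpow (le_of_lt hM2) (le_of_lt hKpos)]
      calc 𝒦 t ^ (b - 1) * ((M ^ 2 : ℝ) ^ (1 - b) * 𝒦 t ^ (1 - b))
          = (M ^ 2 : ℝ) ^ (1 - b) * (𝒦 t ^ (b - 1) * 𝒦 t ^ (1 - b)) := by ring
        _ = (M ^ 2 : ℝ) ^ (1 - b) := by
            rw [← Real.rpow_add hKpos]
            norm_num
        _ = M ^ 2 * A := by
            rw [hA, show (1:ℝ) - b = 1 + -b by ring, Real.rpow_add hM2, Real.rpow_one]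
    rw [hp]
    simp only
    have f1 : ∀ X : ℝ, (1 - b) * 𝒦 t ^ b * 𝒢 t ^ (-b) * X = ((1 - b) * A) * X := fun X => by
      rw [mul_assoc (1 - b), e1]
    have f2 : ∀ X : ℝ, b * 𝒦 t ^ (b - 1) * 𝒢 t ^ (1 - b) * X = (b * (M ^ 2 * A)) * X :=
      fun X => by rw [mul_assoc b, e2]
    simp only [f1, f2]
    have lhs_eq : ∑ μ, Υ (c t) μ * (1 / n t *
          (((1 - b) * A) * (∑ ν, g (c t) μ ν * deriv (fun s => c s ν) t)
            - (b * (M ^ 2 * A)) * (∑ ν, K (c t) μ ν * deriv (fun s => c s ν) t)))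
        = ∑ μ, ∑ ν, (Υ (c t) μ * g (c t) μ ν * deriv (fun s => c s ν) t * ((1 - b) * A)
            - Υ (c t) μ * K (c t) μ ν * deriv (fun s => c s ν) t * (b * (M ^ 2 * A))) / n t := by
      refine Finset.sum_congr rfl fun μ _ => ?_
      simp only [Finset.mul_sum, mul_sub, ← Finset.sum_sub_distrib, Finset.sum_div]
      refine Finset.sum_congr rfl fun ν _ => by ring
    have rhs_eq : ((1 - b) * A) * (S t / n t)
        = ∑ μ, ∑ ν, (Υ (c t) μ * g (c t) μ ν * deriv (fun s => c s ν) t * ((1 - b) * A)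
            - Υ (c t) μ * K (c t) μ ν * deriv (fun s => c s ν) t * (b * (M ^ 2 * A))) / n t := by
      simp only [hS]
      rw [← mul_div_assoc, Finset.mul_sum, Finset.sum_div, Finset.sum_comm]
      refine Finset.sum_congr rfl fun μ _ => ?_
      simp only [Finset.sum_mul, Finset.mul_sum, Finset.sum_div]
      refine Finset.sum_congr rfl fun ν _ => ?_
      rw [div_eq_div_iff hnt hnt]
      field_simp
    rw [lhs_eq, rhs_eq]
  -- conclude
  have hFd : ∀ t ∈ Set.Ioo a₁ a₂,
      HasDerivAt (fun s => ((1 - b) * A) * (S s / n s)) 0 t := by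
    intro t ht
    have hnt : n t ≠ 0 := ne_of_gt (hnpos t ht)
    have h1 := HasDerivAt.const_mul ((1 - b) * A) ((hSd t ht).fun_div (hnd t ht) hnt)
    refine h1.congr_deriv ?_
    field_simp
    ring
  intro t₁ ht₁ t₂ ht₂
  rw [hFeq t₁ ht₁, hFeq t₂ ht₂]
  exact const_of_deriv_zero hFd t₁ ht₁ t₂ ht₂
end
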